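/- arXiv:2202.03523 — 2 statements merged into one kernel-verified Lean document; each statement's English description precedes it below -/
import Mathlib

section
/- Assume Assumptions A1 and A2 hold. Then a family σ_Λ of states on the subsystems X ∈ Λ satisfies σ_Λ ∉ C_{R|T,Λ} if and only if for every family 𝒰 = (U_{i|X})_{X∈Λ, 1≤i≤d_X+1} of unitary matrices on the subsystems X there exists a strictly positive subchannel discrimination task D for 𝒰 such that sup_{τ_Λ ∈ C_{R|T,Λ}} P_D(τ_Λ, 𝒰) < P_D(σ_Λ, 𝒰). -/
/-!
If `σ_Λ ∉ C_{R|T,Λ}`, Hahn–Banach separates it from this compact convex set by a functional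
`τ_Λ ↦ ∑_X Re tr(Y_X τ_X)` with Hermitian `Y_X`. For each subsystem `X` and unitaries `U_{i|X}`
one builds a strictly positive task with `∑_i p_{i|X} U_{i|X}† E_{i|X} U_{i|X}` equal to
`(d_X + 1)⁻¹ I + c_X Y_X`: giving two outcomes different weights `q₀ ≠ q₁` makes
`B ↦ q₀ U₀† B U₀ - q₁ U₁† B U₁` injective (the operator norm is unitarily invariant), hence onto,
and `E_{i|X} = (d_X + 1)⁻¹ I + c_X δ_i B` with `δ = e₀ - e₁` stays positive definite for small
`c_X`. Weighting subsystem `X` by `1 / c_X` turns the success probability into an increasing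
affine function of the separating functional, so `σ_Λ` beats every member of `C_{R|T,Λ}`.
Conversely, the success probability is continuous and `C_{R|T,Λ}` is compact, so the supremum
over `C_{R|T,Λ}` bounds its value at every member of `C_{R|T,Λ}`.
-/

open scoped ComplexOrder ENNReal Kronecker Matrix

namespace RMP

variable {ι : Type} [Fintype ι] [DecidableEq ι]
variable (d : ι → Type) [∀ i, Fintype (d i)] [∀ i, DecidableEq (d i)] [∀ i, Nonempty (d i)]

abbrev GlobalMat : Type := Matrix (∀ i, d i) (∀ i, d i) ℂ

abbrev SubMat (X : Finset ι) : Type :=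
  Matrix (∀ i : X, d i.1) (∀ i : X, d i.1) ℂ

def IsState {m : Type} [Fintype m] (ρ : Matrix m m ℂ) : Prop :=
  ρ.PosSemidef ∧ ρ.trace = 1

/-- The assignment `a ⊕ c` on `ι`. -/
def combine (X : Finset ι) (a : ∀ i : X, d i.1) (c : ∀ i : (Xᶜ : Finset ι), d i.1) :
    ∀ i, d i := fun i =>
  if h : i ∈ X then a ⟨i, h⟩ else c ⟨i, Finset.mem_compl.mpr h⟩

/-- The partial trace `tr_{S∖X}`. -/
noncomputable def ptrace (X : Finset ι) (ρ : GlobalMat d) : SubMat d X :=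
  Matrix.of fun a b =>
    ∑ c : ∀ i : (Xᶜ : Finset ι), d i.1, ρ (combine d X a c) (combine d X b c)

variable (Λ : Finset (Finset ι)) (T : Finset ι) (F : Set (SubMat d T))

/-- The set `C_{R|T,Λ}`. -/
def CRT : Set (∀ X : Λ, SubMat d X.1) :=
  {σ | ∃ ρ : GlobalMat d, IsState ρ ∧ (∀ X : Λ, ptrace d X.1 ρ = σ X) ∧ ptrace d T ρ ∈ F}

/-- The cone `𝒞_{R|T}`. -/
def coneRT : Set (GlobalMat d) :=
  {V | ∃ α : ℝ, 0 ≤ α ∧ ∃ η : GlobalMat d, IsState η ∧ ptrace d T η ∈ F ∧ V = α • η}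

def IsProperCone (C : Set (GlobalMat d)) : Prop :=
  C.Nonempty ∧ Convex ℝ C ∧ IsClosed C ∧
    (∀ (α : ℝ) (V : GlobalMat d), 0 ≤ α → V ∈ C → α • V ∈ C) ∧
    (∀ V : GlobalMat d, V ∈ C → -V ∈ C → V = 0)

/-- The primal value `t(σ_Λ)`. -/
noncomputable def primal (σ : ∀ X : Λ, SubMat d X.1) : ℝ≥0∞ :=
  sInf {t | ∃ V ∈ coneRT d T F,
    (∀ X : Λ, (ptrace d X.1 V - σ X).PosSemidef) ∧ t = ENNReal.ofReal V.trace.re}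

/-- The dual value `s(σ_Λ)`. -/
noncomputable def dual (σ : ∀ X : Λ, SubMat d X.1) : ℝ≥0∞ :=
  sSup {s | ∃ Y : ∀ X : Λ, SubMat d X.1,
    (∀ X : Λ, (Y X).PosSemidef) ∧
    (∀ τ ∈ CRT d Λ T F, (∑ X : Λ, (τ X * Y X).trace.re) ≤ 1) ∧
    s = ENNReal.ofReal (∑ X : Λ, (σ X * Y X).trace.re)}

end RMP

namespace RMP

/-- The number of levels `d_X` of the subsystem `X`. -/
abbrev dimX {ι : Type} [Fintype ι] [DecidableEq ι]
    (d : ι → Type) [∀ i, Fintype (d i)] [∀ i, DecidableEq (d i)]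
    (X : Finset ι) : ℕ :=
  Fintype.card (∀ i : X, d i.1)

/-- The success probability `P_D(κ_Λ, 𝒰)` of the task `D = (p, q, E)`. -/
noncomputable def successProb {ι : Type} [Fintype ι] [DecidableEq ι]
    (d : ι → Type) [∀ i, Fintype (d i)] [∀ i, DecidableEq (d i)]
    (Λ : Finset (Finset ι))
    (U : ∀ X : Λ, Fin (dimX d X.1 + 1) → SubMat d X.1)
    (p : Λ → ℝ) (q : ∀ X : Λ, Fin (dimX d X.1 + 1) → ℝ)
    (E : ∀ X : Λ, Fin (dimX d X.1 + 1) → SubMat d X.1)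
    (κ : ∀ X : Λ, SubMat d X.1) : ℝ :=
  ∑ X : Λ, ∑ i : Fin (dimX d X.1 + 1),
    p X * q X i * (E X i * (U X i * κ X * (U X i)ᴴ)).trace.re

end RMP

theorem Finset.sum_single_sub_single_smul {R k M : Type*} [Ring R] [Fintype k] [DecidableEq k]
    [AddCommGroup M] [Module R M] (i₀ i₁ : k) (v : k → M) :
    ∑ i, (Pi.single i₀ (1 : R) - Pi.single i₁ 1 : k → R) i • v i = v i₀ - v i₁ := by
  simp [sub_smul, Finset.sum_sub_distrib, Pi.single_apply, ite_smul]

namespace Matrix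

instance locallyConvexSpace {𝕜 E m n : Type*} [Semiring 𝕜] [PartialOrder 𝕜] [AddCommMonoid E]
    [Module 𝕜 E] [TopologicalSpace E] [LocallyConvexSpace 𝕜 E] :
    LocallyConvexSpace 𝕜 (Matrix m n E) :=
  inferInstanceAs (LocallyConvexSpace 𝕜 (m → n → E))

variable {n : Type*}

theorem PosSemidef.norm_sq_apply_le {𝕜 : Type*} [RCLike 𝕜] {A : Matrix n n 𝕜}
    (hA : A.PosSemidef) (i j : n) : (‖A i j‖ ^ 2 : 𝕜) ≤ A i i * A j j := by
  have hdet := (hA.submatrix ![i, j]).det_nonneg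
  rw [det_fin_two] at hdet
  simp only [submatrix_apply, Matrix.cons_val_zero, Matrix.cons_val_one] at hdet
  rw [← hA.isHermitian.apply j i, RCLike.star_def, RCLike.mul_conj] at hdet
  exact sub_nonneg.1 hdet

variable [Fintype n]

theorem PosSemidef.apply_le_trace {𝕜 : Type*} [RCLike 𝕜] {A : Matrix n n 𝕜}
    (hA : A.PosSemidef) (i : n) : A i i ≤ A.trace :=
  Finset.single_le_sum (f := A.diag) (fun _ _ => hA.diag_nonneg) (Finset.mem_univ i)

theorem isClosed_setOf_posSemidef {𝕜 : Type*} [RCLike 𝕜] :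
    IsClosed {A : Matrix n n 𝕜 | A.PosSemidef} := by
  simp only [posSemidef_iff_dotProduct_mulVec, Set.ofPred_and, Set.ofPred_forall]
  exact (isClosed_eq continuous_id.matrix_conjTranspose continuous_id).inter
    (isClosed_iInter fun x => isClosed_le continuous_const (by fun_prop))

theorem re_trace_conjTranspose_mul {W B : Matrix n n ℂ} (hB : B.IsHermitian) :
    (Wᴴ * B).trace.re = (W * B).trace.re := by
  rw [← hB.eq, ← conjTranspose_mul, trace_conjTranspose, trace_mul_comm, hB.eq]
  exact Complex.conj_re _

theorem sum_re_trace_mul_conj {k : Type*} [Fintype k] (q : k → ℝ) (E U : k → Matrix n n ℂ)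
    (κ : Matrix n n ℂ) :
    ∑ i, q i * (E i * (U i * κ * (U i)ᴴ)).trace.re
      = ((∑ i, q i • ((U i)ᴴ * E i * U i)) * κ).trace.re := by
  simp only [Finset.sum_mul, trace_sum, Complex.re_sum, smul_mul, trace_smul, Complex.real_smul,
    Complex.re_ofReal_mul]
  congr! 2 with i
  rw [← Matrix.mul_assoc, ← Matrix.mul_assoc, trace_mul_comm, ← Matrix.mul_assoc,
    ← Matrix.mul_assoc]

variable [DecidableEq n]

theorem exists_re_trace_mul_eq (f : Matrix n n ℂ →ₗ[ℝ] ℝ) :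
    ∃ W : Matrix n n ℂ, ∀ B, f B = (W * B).trace.re := by
  refine ⟨of fun j i => (f (single i j 1) : ℂ) - f (single i j Complex.I) * Complex.I,
    fun B => ?_⟩
  have hsingle : ∀ i j (z : ℂ),
      f (single i j z) = z.re * f (single i j 1) + z.im * f (single i j Complex.I) := by
    intro i j z
    rw [← smul_eq_mul, ← smul_eq_mul, ← map_smul, ← map_smul, ← map_add, smul_single,
      smul_single, ← single_add]
    congr 2
    simp
  conv_lhs => rw [matrix_eq_sum_single B]
  simp only [map_sum, trace, diag, mul_apply, of_apply, Complex.re_sum]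
  rw [Finset.sum_comm]
  congr! 2 with i _ j
  rw [hsingle]
  simp only [Complex.mul_re, Complex.sub_re, Complex.sub_im, Complex.ofReal_re,
    Complex.ofReal_im, Complex.mul_im, Complex.I_re, Complex.I_im]
  ring

theorem exists_isHermitian_re_trace_mul_eq (f : Matrix n n ℂ →ₗ[ℝ] ℝ) :
    ∃ Y : Matrix n n ℂ, Y.IsHermitian ∧ ∀ B, B.IsHermitian → f B = (Y * B).trace.re := by
  obtain ⟨W, hW⟩ := exists_re_trace_mul_eq f
  refine ⟨realPart W, (realPart W).2, fun B hB => ?_⟩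
  rw [realPart_apply_coe, smul_mul, add_mul, trace_smul, trace_add, Complex.real_smul,
    Complex.re_ofReal_mul, Complex.add_re, star_eq_conjTranspose, re_trace_conjTranspose_mul hB,
    hW]
  ring

theorem sum_smul_unitary_conj_smul_one_add {k : Type*} [Fintype k] {U : k → Matrix n n ℂ}
    (hU : ∀ i, U i ∈ unitaryGroup n ℂ) {q : k → ℝ} (hq : ∑ i, q i = 1) (α : ℝ) (γ : k → ℝ)
    (B : Matrix n n ℂ) :
    ∑ i, q i • ((U i)ᴴ * (α • 1 + γ i • B) * U i)
      = α • 1 + ∑ i, (q i * γ i) • ((U i)ᴴ * B * U i) := by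
  have hterm : ∀ i, q i • ((U i)ᴴ * (α • 1 + γ i • B) * U i)
      = q i • α • (1 : Matrix n n ℂ) + (q i * γ i) • ((U i)ᴴ * B * U i) := fun i => by
    have hUU : (U i)ᴴ * U i = 1 := Unitary.star_mul_self_of_mem (hU i)
    simp only [Matrix.mul_add, Matrix.add_mul, Matrix.mul_smul, Matrix.smul_mul, Matrix.mul_one,
      hUU]
    module
  rw [Finset.sum_congr rfl fun i _ => hterm i, Finset.sum_add_distrib, ← Finset.sum_smul, hq,
    one_smul]

theorem exists_isHermitian_sum_re_trace_mul_eq {κ : Type*} [Fintype κ] [DecidableEq κ]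
    {n : κ → Type*} [∀ k, Fintype (n k)] [∀ k, DecidableEq (n k)]
    (f : (∀ k, Matrix (n k) (n k) ℂ) →ₗ[ℝ] ℝ) :
    ∃ Y : ∀ k, Matrix (n k) (n k) ℂ, (∀ k, (Y k).IsHermitian) ∧
      ∀ B : ∀ k, Matrix (n k) (n k) ℂ, (∀ k, (B k).IsHermitian) →
        f B = ∑ k, (Y k * B k).trace.re := by
  choose Y hY hfY using fun k =>
    exists_isHermitian_re_trace_mul_eq (f ∘ₗ LinearMap.single ℝ (fun k => Matrix (n k) (n k) ℂ) k)
  refine ⟨Y, hY, fun B hB => ?_⟩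
  conv_lhs => rw [← Finset.univ_sum_single B, map_sum]
  exact Finset.sum_congr rfl fun k _ => hfY k (B k) (hB k)

section L2

open scoped Matrix.Norms.L2Operator MatrixOrder

theorem posDef_smul_one_add_of_norm_lt {A : Matrix n n ℂ} (hA : A.IsHermitian) {α : ℝ}
    (h : ‖A‖ < α) : (α • (1 : Matrix n n ℂ) + A).PosDef := by
  have hle : -(algebraMap ℝ _ ‖A‖) ≤ A :=
    IsSelfAdjoint.neg_algebraMap_norm_le_self hA.isSelfAdjoint
  rw [le_iff, sub_neg_eq_add, Algebra.algebraMap_eq_smul_one] at hle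
  rw [show α • (1 : Matrix n n ℂ) + A = (α - ‖A‖) • 1 + (A + ‖A‖ • 1) by module]
  exact (PosDef.one.smul (sub_pos.2 h)).add_posSemidef hle

theorem eq_zero_of_smul_unitary_conj_eq {B U V : Matrix n n ℂ} (hU : U ∈ unitaryGroup n ℂ)
    (hV : V ∈ unitaryGroup n ℂ) {a b : ℝ} (hab : |a| ≠ |b|)
    (h : a • (Uᴴ * B * U) = b • (Vᴴ * B * V)) : B = 0 := by
  have hnorm : ∀ W ∈ unitaryGroup n ℂ, ‖Wᴴ * B * W‖ = ‖B‖ := fun W hW => by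
    rw [← star_eq_conjTranspose, CStarRing.norm_mul_mem_unitary _ hW,
      CStarRing.norm_mem_unitary_mul _ (Unitary.star_mem hW)]
  have := congrArg norm h
  rw [norm_smul, norm_smul, hnorm U hU, hnorm V hV, Real.norm_eq_abs, Real.norm_eq_abs] at this
  exact norm_eq_zero.1 ((mul_eq_mul_right_iff.1 this).resolve_left hab)

theorem exists_isHermitian_smul_conj_sub_smul_conj_eq {U V : Matrix n n ℂ}
    (hU : U ∈ unitaryGroup n ℂ) (hV : V ∈ unitaryGroup n ℂ) {a b : ℝ} (hab : |a| ≠ |b|)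
    {Y : Matrix n n ℂ} (hY : Y.IsHermitian) :
    ∃ B : Matrix n n ℂ, B.IsHermitian ∧ a • (Uᴴ * B * U) - b • (Vᴴ * B * V) = Y := by
  let T : Matrix n n ℂ →ₗ[ℝ] Matrix n n ℂ :=
    { toFun := fun B => a • (Uᴴ * B * U) - b • (Vᴴ * B * V)
      map_add' := fun B C => by simp only [Matrix.mul_add, Matrix.add_mul, smul_add]; abel
      map_smul' := fun r B => by
        simp only [Matrix.mul_smul, Matrix.smul_mul, smul_sub, smul_comm r, RingHom.id_apply] }
  have hT_inj : Function.Injective T := (injective_iff_map_eq_zero T).2 fun B hB =>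
    eq_zero_of_smul_unitary_conj_eq hU hV hab (sub_eq_zero.1 hB)
  have hT_star : ∀ B, T (star B) = star (T B) := fun B => by
    simp [T, star_eq_conjTranspose, Matrix.mul_assoc]
  obtain ⟨B, hB⟩ := LinearMap.injective_iff_surjective.1 hT_inj Y
  refine ⟨realPart B, (realPart B).2, ?_⟩
  change T (realPart B) = Y
  rw [realPart_apply_coe, map_smul, map_add, hT_star, hB, ← realPart_apply_coe,
    hY.isSelfAdjoint.coe_realPart]

theorem exists_discrimination_task {k : Type*} [Fintype k] [DecidableEq k]
    (hk : 1 < Fintype.card k) {U : k → Matrix n n ℂ} (hU : ∀ i, U i ∈ unitaryGroup n ℂ)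
    {Y : Matrix n n ℂ} (hY : Y.IsHermitian) :
    ∃ (q : k → ℝ) (E : k → Matrix n n ℂ) (c : ℝ), 0 < c ∧ (∀ i, 0 < q i) ∧ ∑ i, q i = 1 ∧
      (∀ i, (E i).PosDef) ∧ ∑ i, E i = 1 ∧
      ∑ i, q i • ((U i)ᴴ * E i * U i) = (Fintype.card k : ℝ)⁻¹ • (1 : Matrix n n ℂ) + c • Y := by
  obtain ⟨i₀, i₁, hne⟩ := Fintype.exists_pair_of_one_lt_card hk
  set α : ℝ := (Fintype.card k : ℝ)⁻¹
  have hα : 0 < α := by positivity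
  have hcard : Fintype.card k • α = 1 := by
    rw [nsmul_eq_mul]; exact mul_inv_cancel₀ (by positivity)
  set δ : k → ℝ := Pi.single i₀ 1 - Pi.single i₁ 1
  have hδ_sum : ∑ i, δ i = 0 := by simp [δ, Finset.sum_sub_distrib]
  have hδ_abs : ∀ i, |δ i| ≤ 1 := fun i => by
    simp only [δ, Pi.sub_apply, Pi.single_apply]
    split_ifs <;> simp_all
  set q : k → ℝ := fun i => α * (1 + δ i / 2)
  have hq : ∀ i, 0 < q i := fun i => mul_pos hα (by linarith [abs_le.1 (hδ_abs i)])
  have hq_ne : |q i₀| ≠ |q i₁| := by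
    simp only [q, δ, Pi.sub_apply, Pi.single_eq_same, Pi.single_eq_of_ne hne,
      Pi.single_eq_of_ne hne.symm]
    rw [abs_of_pos (by positivity), abs_of_pos (by positivity)]
    intro h; nlinarith
  obtain ⟨B, hB, hBY⟩ :=
    exists_isHermitian_smul_conj_sub_smul_conj_eq (hU i₀) (hU i₁) hq_ne hY
  set c : ℝ := α / (‖B‖ + 1)
  have hc : 0 < c := by positivity
  have hcB : c * ‖B‖ < α := by
    rw [div_mul_eq_mul_div, div_lt_iff₀ (by positivity)]; nlinarith [norm_nonneg B]
  have hq_sum : ∑ i, q i = 1 := by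
    simp only [q, mul_add, Finset.sum_add_distrib, ← Finset.mul_sum, ← Finset.sum_div, hδ_sum]
    simpa [mul_comm] using hcard
  refine ⟨q, fun i => α • 1 + (c * δ i) • B, c, hc, hq, hq_sum, fun i => ?_, ?_, ?_⟩
  · refine posDef_smul_one_add_of_norm_lt (hB.smul (.all _)) ?_
    rw [norm_smul, Real.norm_eq_abs, abs_mul, abs_of_pos hc]
    calc c * |δ i| * ‖B‖ ≤ c * ‖B‖ := by gcongr; exact mul_le_of_le_one_right hc.le (hδ_abs i)
      _ < α := hcB
  · rw [Finset.sum_add_distrib, Finset.sum_const, Finset.card_univ, ← smul_assoc, hcard,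
      one_smul, ← Finset.sum_smul, ← Finset.mul_sum, hδ_sum, mul_zero, zero_smul, add_zero]
  · rw [sum_smul_unitary_conj_smul_one_add hU hq_sum, ← hBY, ← Finset.sum_single_sub_single_smul
      (R := ℝ) i₀ i₁ fun i => q i • ((U i)ᴴ * B * U i), Finset.smul_sum]
    congr! 2 with i
    module

end L2

end Matrix

namespace RMP

section States

variable {m : Type} [Fintype m]

theorem IsState.norm_apply_le_one {ρ : Matrix m m ℂ} (hρ : IsState ρ) (i j : m) :
    ‖ρ i j‖ ≤ 1 := by
  have hdiag : ∀ i, ρ i i ≤ 1 := fun i => hρ.2 ▸ hρ.1.apply_le_trace i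
  have h := (hρ.1.norm_sq_apply_le i j).trans
    (mul_le_one₀ (hdiag i) hρ.1.diag_nonneg (hdiag j))
  rw [← RCLike.ofReal_pow, ← RCLike.ofReal_one, RCLike.ofReal_le_ofReal] at h
  exact (pow_le_one_iff_of_nonneg (norm_nonneg _) two_ne_zero).1 h

theorem isClosed_setOf_isState : IsClosed {ρ : Matrix m m ℂ | IsState ρ} :=
  Matrix.isClosed_setOf_posSemidef.inter (isClosed_eq continuous_id.matrix_trace continuous_const)

theorem isCompact_setOf_isState : IsCompact {ρ : Matrix m m ℂ | IsState ρ} :=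
  (isCompact_univ_pi fun _ => isCompact_univ_pi fun _ => isCompact_closedBall (0 : ℂ) 1)
    |>.of_isClosed_subset isClosed_setOf_isState fun ρ hρ => by
      simpa [Set.mem_univ_pi] using hρ.norm_apply_le_one

theorem convex_setOf_isState : Convex ℝ {ρ : Matrix m m ℂ | IsState ρ} := by
  rintro ρ₁ ⟨hρ₁, htr₁⟩ ρ₂ ⟨hρ₂, htr₂⟩ a b ha hb hab
  refine ⟨(hρ₁.smul ha).add (hρ₂.smul hb), ?_⟩
  simp only [Matrix.trace_add, Matrix.trace_smul, htr₁, htr₂, Complex.real_smul, mul_one]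
  exact_mod_cast hab

end States

section PartialTrace

variable {ι : Type} [Fintype ι] [DecidableEq ι]
variable (d : ι → Type) [∀ i, Fintype (d i)]

def combineEquiv (X : Finset ι) :
    ((∀ i : X, d i.1) × (∀ i : (Xᶜ : Finset ι), d i.1)) ≃ ∀ i, d i where
  toFun p := combine d X p.1 p.2
  invFun j := (fun i => j i, fun i => j i)
  left_inv p := by
    ext i
    · simp [combine, i.2]
    · simp [combine, Finset.mem_compl.1 i.2]
  right_inv j := by
    funext i
    by_cases h : i ∈ X <;> simp [combine, h]

theorem ptrace_eq_sum_submatrix (X : Finset ι) (ρ : GlobalMat d) :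
    ptrace d X ρ = ∑ c, ρ.submatrix (combine d X · c) (combine d X · c) := by
  ext a b
  simp [ptrace, Matrix.sum_apply]

theorem posSemidef_ptrace (X : Finset ι) {ρ : GlobalMat d} (hρ : ρ.PosSemidef) :
    (ptrace d X ρ).PosSemidef := by
  rw [ptrace_eq_sum_submatrix]
  exact Matrix.posSemidef_sum _ fun c _ => hρ.submatrix _

theorem trace_ptrace (X : Finset ι) (ρ : GlobalMat d) : (ptrace d X ρ).trace = ρ.trace := by
  simp only [Matrix.trace, Matrix.diag, ptrace, Matrix.of_apply]
  rw [← Fintype.sum_prod_type', ← (combineEquiv d X).sum_comp]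
  rfl

theorem IsState.ptrace (X : Finset ι) {ρ : GlobalMat d} (hρ : IsState ρ) :
    IsState (ptrace d X ρ) :=
  ⟨posSemidef_ptrace d X hρ.1, (trace_ptrace d X ρ).trans hρ.2⟩

noncomputable def ptraceLinearMap (X : Finset ι) : GlobalMat d →ₗ[ℂ] SubMat d X where
  toFun := ptrace d X
  map_add' ρ η := by ext; simp [ptrace, Finset.sum_add_distrib]
  map_smul' z ρ := by ext; simp [ptrace, Finset.mul_sum]

variable (Λ : Finset (Finset ι)) (T : Finset ι) (F : Set (SubMat d T))

noncomputable def marginals : GlobalMat d →ₗ[ℝ] ∀ X : Λ, SubMat d X.1 :=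
  LinearMap.pi fun X => (ptraceLinearMap d X.1).restrictScalars ℝ

theorem CRT_eq_image : CRT d Λ T F =
    marginals d Λ '' ({ρ | IsState ρ} ∩ ptraceLinearMap d T ⁻¹' F) := by
  ext τ
  constructor
  · rintro ⟨ρ, hρ, hmarg, hT⟩
    exact ⟨ρ, ⟨hρ, hT⟩, funext hmarg⟩
  · rintro ⟨ρ, ⟨hρ, hT⟩, rfl⟩
    exact ⟨ρ, hρ, fun X => rfl, hT⟩

theorem convex_CRT (hF : Convex ℝ F) : Convex ℝ (CRT d Λ T F) := by
  rw [CRT_eq_image]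
  exact (convex_setOf_isState.inter
    (hF.linear_preimage ((ptraceLinearMap d T).restrictScalars ℝ))).linear_image _

theorem isCompact_CRT (hF : IsCompact F) : IsCompact (CRT d Λ T F) := by
  rw [CRT_eq_image]
  exact (isCompact_setOf_isState.inter_right (hF.isClosed.preimage
    (ptraceLinearMap d T).continuous_of_finiteDimensional)).image
    (marginals d Λ).continuous_of_finiteDimensional

theorem isState_of_mem_CRT {τ : ∀ X : Λ, SubMat d X.1} (hτ : τ ∈ CRT d Λ T F) (X : Λ) :
    IsState (τ X) := by
  obtain ⟨ρ, hρ, hmarg, -⟩ := hτ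
  exact hmarg X ▸ hρ.ptrace d X.1

theorem nonempty_of_notMem_CRT (hne : (CRT d Λ T F).Nonempty) {σ : ∀ X : Λ, SubMat d X.1}
    (hσ : σ ∉ CRT d Λ T F) : Nonempty Λ := by
  by_contra hΛ
  rw [not_nonempty_iff] at hΛ
  obtain ⟨τ, hτ⟩ := hne
  exact hσ (Subsingleton.elim τ σ ▸ hτ)

end PartialTrace

section SuccessProb

variable {ι : Type} [Fintype ι] [DecidableEq ι]
variable (d : ι → Type) [∀ i, Fintype (d i)] [∀ i, DecidableEq (d i)]
variable (Λ : Finset (Finset ι))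

theorem continuous_successProb (U : ∀ X : Λ, Fin (dimX d X.1 + 1) → SubMat d X.1)
    (p : Λ → ℝ) (q : ∀ X : Λ, Fin (dimX d X.1 + 1) → ℝ)
    (E : ∀ X : Λ, Fin (dimX d X.1 + 1) → SubMat d X.1) :
    Continuous (successProb d Λ U p q E) := by
  unfold successProb
  fun_prop

theorem successProb_le_sSup (T : Finset ι) {F : Set (SubMat d T)} (hF : IsCompact F)
    (U : ∀ X : Λ, Fin (dimX d X.1 + 1) → SubMat d X.1)
    (p : Λ → ℝ) (q : ∀ X : Λ, Fin (dimX d X.1 + 1) → ℝ)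
    (E : ∀ X : Λ, Fin (dimX d X.1 + 1) → SubMat d X.1)
    {τ : ∀ X : Λ, SubMat d X.1} (hτ : τ ∈ CRT d Λ T F) :
    successProb d Λ U p q E τ ≤
      sSup {r : ℝ | ∃ τ ∈ CRT d Λ T F, r = successProb d Λ U p q E τ} := by
  have himage : {r : ℝ | ∃ τ ∈ CRT d Λ T F, r = successProb d Λ U p q E τ} =
      successProb d Λ U p q E '' CRT d Λ T F := by
    ext r
    simp [eq_comm]
  rw [himage]
  exact le_csSup ((isCompact_CRT d Λ T F hF).bddAbove_image
    (continuous_successProb d Λ U p q E).continuousOn) (Set.mem_image_of_mem _ hτ)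

theorem exists_task_successProb_eq [∀ i, Nonempty (d i)] [Nonempty Λ]
    {U : ∀ X : Λ, Fin (dimX d X.1 + 1) → SubMat d X.1}
    (hU : ∀ (X : Λ) i, U X i ∈ Matrix.unitaryGroup (∀ j : X.1, d j.1) ℂ)
    {Y : ∀ X : Λ, SubMat d X.1} (hY : ∀ X, (Y X).IsHermitian) :
    ∃ (p : Λ → ℝ) (q : ∀ X : Λ, Fin (dimX d X.1 + 1) → ℝ)
      (E : ∀ X : Λ, Fin (dimX d X.1 + 1) → SubMat d X.1) (β γ : ℝ), 0 < γ ∧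
      (∀ X, 0 < p X) ∧ ∑ X, p X = 1 ∧ (∀ X i, 0 < q X i) ∧ (∀ X, ∑ i, q X i = 1) ∧
      (∀ X i, (E X i).PosDef) ∧ (∀ X, ∑ i, E X i = 1) ∧
      ∀ κ : ∀ X : Λ, SubMat d X.1, (∀ X, (κ X).trace = 1) →
        successProb d Λ U p q E κ = β + γ * ∑ X, (Y X * κ X).trace.re := by
  have hcard : ∀ X : Λ, 1 < Fintype.card (Fin (dimX d X.1 + 1)) := fun X => by
    rw [Fintype.card_fin]
    exact Nat.succ_lt_succ Fintype.card_pos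
  choose q E c hc hq hq_sum hE hE_sum hqE using
    fun X => Matrix.exists_discrimination_task (hcard X) (hU X) (hY X)
  set S := ∑ X, (c X)⁻¹
  have hS : 0 < S := Finset.sum_pos (fun X _ => inv_pos.2 (hc X)) Finset.univ_nonempty
  refine ⟨fun X => (c X)⁻¹ / S, q, E,
    ∑ X, (c X)⁻¹ / S * (Fintype.card (Fin (dimX d X.1 + 1)) : ℝ)⁻¹, S⁻¹, inv_pos.2 hS,
    fun X => div_pos (inv_pos.2 (hc X)) hS, by rw [← Finset.sum_div, div_self hS.ne'],
    hq, hq_sum, hE, hE_sum, fun κ hκ => ?_⟩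
  have hX : ∀ X, ∑ i, q X i * (E X i * (U X i * κ X * (U X i)ᴴ)).trace.re
      = (Fintype.card (Fin (dimX d X.1 + 1)) : ℝ)⁻¹ + c X * (Y X * κ X).trace.re := by
    intro X
    rw [Matrix.sum_re_trace_mul_conj, hqE, Matrix.add_mul, Matrix.smul_mul, Matrix.smul_mul,
      Matrix.one_mul, Matrix.trace_add, Matrix.trace_smul, Matrix.trace_smul, hκ,
      Complex.add_re, Complex.real_smul, Complex.real_smul, Complex.re_ofReal_mul,
      Complex.re_ofReal_mul, Complex.one_re, mul_one]
  simp only [successProb, mul_assoc (_ / S), ← Finset.mul_sum, hX]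
  rw [Finset.mul_sum, ← Finset.sum_add_distrib]
  refine Finset.sum_congr rfl fun X _ => ?_
  field_simp [(hc X).ne']

end SuccessProb

theorem rFree_incompatible_iff_discrimination_advantage_general
    {ι : Type} [Fintype ι] [DecidableEq ι]
    (d : ι → Type) [∀ i, Fintype (d i)] [∀ i, DecidableEq (d i)] [∀ i, Nonempty (d i)]
    (Λ : Finset (Finset ι)) (T : Finset ι) (F : Set (SubMat d T))
    (hA1 : Convex ℝ F ∧ IsCompact F)
    (hA2 : ∃ ρ : GlobalMat d, IsState ρ ∧ ptrace d T ρ ∈ F ∧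
      ∀ X : Λ, (ptrace d X.1 ρ).PosDef)
    (σ : ∀ X : Λ, SubMat d X.1) (hσ : ∀ X : Λ, IsState (σ X)) :
    σ ∉ CRT d Λ T F ↔
      ∀ U : ∀ X : Λ, Fin (dimX d X.1 + 1) → SubMat d X.1,
        (∀ (X : Λ) (i : Fin (dimX d X.1 + 1)),
          U X i ∈ Matrix.unitaryGroup (∀ j : X.1, d j.1) ℂ) →
        ∃ (p : Λ → ℝ) (q : ∀ X : Λ, Fin (dimX d X.1 + 1) → ℝ)
          (E : ∀ X : Λ, Fin (dimX d X.1 + 1) → SubMat d X.1),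
          (∀ X : Λ, 0 < p X) ∧ (∑ X : Λ, p X = 1) ∧
          (∀ (X : Λ) (i : Fin (dimX d X.1 + 1)), 0 < q X i) ∧
          (∀ X : Λ, ∑ i : Fin (dimX d X.1 + 1), q X i = 1) ∧
          (∀ (X : Λ) (i : Fin (dimX d X.1 + 1)), (E X i).PosDef) ∧
          (∀ X : Λ, ∑ i : Fin (dimX d X.1 + 1), E X i = 1) ∧
          sSup {r : ℝ | ∃ τ ∈ CRT d Λ T F, r = successProb d Λ U p q E τ}
            < successProb d Λ U p q E σ := by
  obtain ⟨ρ₀, hρ₀, hρ₀F, -⟩ := hA2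
  have hρ₀_mem : (fun X : Λ => ptrace d X.1 ρ₀) ∈ CRT d Λ T F :=
    ⟨ρ₀, hρ₀, fun _ => rfl, hρ₀F⟩
  refine ⟨fun hσ_out U hU => ?_, fun h hσ_in => ?_⟩
  · have := nonempty_of_notMem_CRT d Λ T F ⟨_, hρ₀_mem⟩ hσ_out
    obtain ⟨f, u, hf_lt, hu_lt⟩ := geometric_hahn_banach_closed_point
      (convex_CRT d Λ T F hA1.1) (isCompact_CRT d Λ T F hA1.2).isClosed hσ_out
    obtain ⟨Y, hY, hfY⟩ := Matrix.exists_isHermitian_sum_re_trace_mul_eq f.toLinearMap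
    obtain ⟨p, q, E, β, γ, hγ, hp, hp_sum, hq, hq_sum, hE, hE_sum, hP⟩ :=
      exists_task_successProb_eq d Λ hU hY
    have hPf : ∀ κ, (∀ X, IsState (κ X)) → successProb d Λ U p q E κ = β + γ * f κ :=
      fun κ hκ => by rw [hP κ fun X => (hκ X).2, ← hfY κ fun X => (hκ X).1.isHermitian]; rfl
    refine ⟨p, q, E, hp, hp_sum, hq, hq_sum, hE, hE_sum, ?_⟩
    calc sSup {r : ℝ | ∃ τ ∈ CRT d Λ T F, r = successProb d Λ U p q E τ}
        ≤ β + γ * u := csSup_le ⟨_, _, hρ₀_mem, rfl⟩ fun r ⟨τ, hτ, hr⟩ => by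
          rw [hr, hPf τ (isState_of_mem_CRT d Λ T F hτ)]
          gcongr
          exact (hf_lt τ hτ).le
      _ < β + γ * f σ := by gcongr
      _ = successProb d Λ U p q E σ := (hPf σ hσ).symm
  · obtain ⟨p, q, E, -, -, -, -, -, -, hlt⟩ :=
      h (fun X _ => (1 : SubMat d X.1)) fun X _ => one_mem _
    exact (successProb_le_sSup d Λ T hA1.2 _ p q E hσ_in).not_gt hlt

/-- Theorem 2 of the paper, "Advantage in Channel Discrimination".
Under Assumptions (A1) and (A2), a family of marginal states `σ_Λ` is `R`-free
incompatible iff for every family of `d_X + 1` unitaries on each `X ∈ Λ` there is a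
strictly positive subchannel discrimination task in which `σ_Λ` strictly outperforms
every member of `C_{R|T,Λ}`. -/
theorem rFree_incompatible_iff_discrimination_advantage
    {ι : Type} [Fintype ι] [DecidableEq ι]
    (d : ι → Type) [∀ i, Fintype (d i)] [∀ i, DecidableEq (d i)] [∀ i, Nonempty (d i)]
    (Λ : Finset (Finset ι)) (T : Finset ι) (F : Set (SubMat d T))
    (hF : ∀ η ∈ F, IsState η)
    (hA1 : Convex ℝ F ∧ IsCompact F)
    (hA2 : ∃ ρ : GlobalMat d, IsState ρ ∧ ptrace d T ρ ∈ F ∧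
      ∀ X : Λ, (ptrace d X.1 ρ).PosDef)
    (σ : ∀ X : Λ, SubMat d X.1) (hσ : ∀ X : Λ, IsState (σ X)) :
    σ ∉ CRT d Λ T F ↔
      ∀ U : ∀ X : Λ, Fin (dimX d X.1 + 1) → SubMat d X.1,
        (∀ (X : Λ) (i : Fin (dimX d X.1 + 1)),
          U X i ∈ Matrix.unitaryGroup (∀ j : X.1, d j.1) ℂ) →
        ∃ (p : Λ → ℝ) (q : ∀ X : Λ, Fin (dimX d X.1 + 1) → ℝ)
          (E : ∀ X : Λ, Fin (dimX d X.1 + 1) → SubMat d X.1),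
          (∀ X : Λ, 0 < p X) ∧ (∑ X : Λ, p X = 1) ∧
          (∀ (X : Λ) (i : Fin (dimX d X.1 + 1)), 0 < q X i) ∧
          (∀ X : Λ, ∑ i : Fin (dimX d X.1 + 1), q X i = 1) ∧
          (∀ (X : Λ) (i : Fin (dimX d X.1 + 1)), (E X i).PosDef) ∧
          (∀ X : Λ, ∑ i : Fin (dimX d X.1 + 1), E X i = 1) ∧
          sSup {r : ℝ | ∃ τ ∈ CRT d Λ T F, r = successProb d Λ U p q E τ}
            < successProb d Λ U p q E σ :=
  rFree_incompatible_iff_discrimination_advantage_general d Λ T F hA1 hA2 σ hσ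

end RMP
end

section
/- If F is compact, then C_{R|T,Λ} is compact (as a subset of the product space of families of matrices). -/
open scoped ComplexOrder ENNReal Kronecker Matrix

namespace RMP



lemma isClosed_nonnegC : IsClosed {z : ℂ | 0 ≤ z} := by
  have h : {z : ℂ | 0 ≤ z} = Complex.re ⁻¹' (Set.Ici 0) ∩ Complex.im ⁻¹' {0} := by
    ext z
    simp only [Set.mem_setOf_eq, Complex.le_def, Set.mem_inter_iff, Set.mem_preimage,
      Set.mem_Ici, Set.mem_singleton_iff, Complex.zero_re, Complex.zero_im]
    exact and_congr Iff.rfl eq_comm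
  rw [h]
  exact (isClosed_Ici.preimage Complex.continuous_re).inter
    (isClosed_singleton.preimage Complex.continuous_im)

lemma isClosed_posSemidef {m : Type} [Fintype m] :
    IsClosed {ρ : Matrix m m ℂ | ρ.PosSemidef} := by
  have h : {ρ : Matrix m m ℂ | ρ.PosSemidef} =
      {ρ : Matrix m m ℂ | ρᴴ = ρ} ∩ ⋂ x : m → ℂ,
        {ρ : Matrix m m ℂ | 0 ≤ star x ⬝ᵥ ρ *ᵥ x} := by
    ext ρ
    simp [Matrix.posSemidef_iff_dotProduct_mulVec, Matrix.IsHermitian, Set.mem_iInter]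
  rw [h]
  refine (isClosed_eq continuous_id.matrix_conjTranspose continuous_id).inter ?_
  refine isClosed_iInter fun x => ?_
  exact isClosed_nonnegC.preimage
    (Continuous.dotProduct continuous_const (continuous_id.matrix_mulVec continuous_const))

lemma star_mul_self_re (z : ℂ) : (star z * z).re = ‖z‖ ^ 2 := by
  rw [Complex.star_def, ← Complex.normSq_eq_conj_mul_self]
  simp [Complex.sq_norm]

lemma isCompact_isState {m : Type} [Fintype m] [DecidableEq m] :
    IsCompact {ρ : Matrix m m ℂ | (ρ.PosSemidef ∧ ρ.trace = 1)} := by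
  have hKc : IsCompact (Set.pi (Set.univ : Set m) fun _ =>
      Set.pi (Set.univ : Set m) fun _ => Metric.closedBall (0 : ℂ) 1) :=
    isCompact_univ_pi fun _ => isCompact_univ_pi fun _ => isCompact_closedBall 0 1
  refine IsCompact.of_isClosed_subset hKc ?_ ?_
  · exact isClosed_posSemidef.inter
      (isClosed_eq (Continuous.matrix_trace continuous_id) continuous_const)
  · rintro ρ ⟨hpsd, htr⟩
    obtain ⟨B, rfl⟩ : ∃ B : Matrix m m ℂ, ρ = Bᴴ * B := by
      open scoped MatrixOrder Matrix.Norms.L2Operator in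
      exact CStarAlgebra.nonneg_iff_eq_star_mul_self.mp hpsd.nonneg
    -- diagonal entries
    have hdiag : ∀ a : m, ((Bᴴ * B) a a).re = ∑ k, ‖B k a‖ ^ 2 := by
      intro a
      rw [Matrix.mul_apply, Complex.re_sum]
      exact Finset.sum_congr rfl fun k _ => by
        rw [Matrix.conjTranspose_apply]; exact star_mul_self_re _
    have hdiag_nonneg : ∀ a : m, 0 ≤ ((Bᴴ * B) a a).re := fun a => by
      rw [hdiag]; positivity
    have htr_re : ∑ a : m, ((Bᴴ * B) a a).re = 1 := by
      have := congrArg Complex.re htr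
      rwa [Matrix.trace, Complex.re_sum] at this
    have hdiag_le : ∀ a : m, ((Bᴴ * B) a a).re ≤ 1 := by
      intro a
      rw [← htr_re]
      exact Finset.single_le_sum (fun b _ => hdiag_nonneg b) (Finset.mem_univ a)
    intro a _ b _
    rw [Metric.mem_closedBall, dist_zero_right]
    have h1 : ‖(Bᴴ * B) a b‖ ≤ ∑ k, ‖B k a‖ * ‖B k b‖ := by
      rw [Matrix.mul_apply]
      refine (norm_sum_le _ _).trans (le_of_eq ?_)
      exact Finset.sum_congr rfl fun k _ => by
        rw [norm_mul, Matrix.conjTranspose_apply, norm_star]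
    have h2 : ∑ k, ‖B k a‖ * ‖B k b‖ ≤
        (∑ k, ‖B k a‖ ^ 2) / 2 + (∑ k, ‖B k b‖ ^ 2) / 2 := by
      rw [← add_div, ← Finset.sum_add_distrib, Finset.sum_div]
      refine Finset.sum_le_sum fun k _ => ?_
      nlinarith [sq_nonneg (‖B k a‖ - ‖B k b‖)]
    calc ‖(Bᴴ * B) a b‖ ≤ (∑ k, ‖B k a‖ ^ 2) / 2 + (∑ k, ‖B k b‖ ^ 2) / 2 := h1.trans h2
      _ ≤ 1 / 2 + 1 / 2 := by
          gcongr <;> [exact (hdiag a ▸ hdiag_le a); exact (hdiag b ▸ hdiag_le b)]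
      _ = 1 := by norm_num


lemma continuous_ptrace {ι : Type} [Fintype ι] [DecidableEq ι]
    (d : ι → Type) [∀ i, Fintype (d i)] [∀ i, DecidableEq (d i)] [∀ i, Nonempty (d i)]
    (X : Finset ι) : Continuous (ptrace d X) := by
  apply continuous_matrix
  intro a b
  unfold ptrace
  simp only [Matrix.of_apply]
  exact continuous_finset_sum _ fun c _ => continuous_apply_apply _ _

/-- Lemma 5 of the paper. If the set `F` of free states is compact,
then the set `C_{R|T,Λ}` of `R`-free compatible families of marginals is compact. -/
theorem CRT_isCompact_of_isCompact_free
    {ι : Type} [Fintype ι] [DecidableEq ι]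
    (d : ι → Type) [∀ i, Fintype (d i)] [∀ i, DecidableEq (d i)] [∀ i, Nonempty (d i)]
    (Λ : Finset (Finset ι)) (T : Finset ι) (F : Set (SubMat d T))
    (hF : ∀ η ∈ F, IsState η)
    (hcomp : IsCompact F) :
    IsCompact (CRT d Λ T F) := by
  have key : CRT d Λ T F = (fun ρ => fun X : Λ => ptrace d X.1 ρ) ''
      {ρ : GlobalMat d | IsState ρ ∧ ptrace d T ρ ∈ F} := by
    ext σ
    constructor
    · rintro ⟨ρ, h1, h2, h3⟩
      exact ⟨ρ, ⟨h1, h3⟩, funext h2⟩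
    · rintro ⟨ρ, ⟨h1, h3⟩, rfl⟩
      exact ⟨ρ, h1, fun X => rfl, h3⟩
  rw [key]
  refine IsCompact.image ?_ (continuous_pi fun X => continuous_ptrace d X.1)
  have hsub : {ρ : GlobalMat d | IsState ρ ∧ ptrace d T ρ ∈ F}
      = {ρ : GlobalMat d | IsState ρ} ∩ (ptrace d T ⁻¹' F) := rfl
  rw [hsub]
  have hS : {ρ : GlobalMat d | IsState ρ}
      = {ρ : Matrix (∀ i, d i) (∀ i, d i) ℂ | (ρ.PosSemidef ∧ ρ.trace = 1)} := rfl
  rw [hS]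
  exact (isCompact_isState).inter_right
    (hcomp.isClosed.preimage (continuous_ptrace d T))

end RMP
end
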